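/- For all positive integers t and all nonnegative integers n, p_{10t,5t}(5n + 4) ≡ 0 (mod 5). -/

import Mathlib

open PowerSeries Finset

/-- The ordinary partition function `p`, extended by zero to negative integers. -/
noncomputable def pInt (m : ℤ) : ℤ :=
  if 0 ≤ m then (Fintype.card (Nat.Partition m.toNat) : ℤ) else 0

/-- `(q^t; q^t)_∞ = ∏_{j ≥ 1} (1 - q^{t j})` as a formal power series over ℤ
(the `n`-th coefficient only depends on the factors with `t(j+1) ≤ n`, so the
truncated finite product gives the correct coefficient). -/
noncomputable def euler (t : ℕ) : PowerSeries ℤ :=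
  PowerSeries.mk fun n =>
    PowerSeries.coeff (R := ℤ) n
      (∏ j ∈ Finset.range (n + 1), (1 - (PowerSeries.X : PowerSeries ℤ) ^ (t * (j + 1))))

/-- `Σ_{k ≥ 0} (-1)^k q^{t k (k+1)/2}` as a formal power series over ℤ. -/
noncomputable def theta (t : ℕ) : PowerSeries ℤ :=
  PowerSeries.mk fun m =>
    ∑ k ∈ Finset.range (m + 1), if 2 * m = t * k * (k + 1) then (-1 : ℤ) ^ k else 0

/-- `Σ_{k ≥ 0} (-1)^k q^{t k^2}` as a formal power series over ℤ. -/
noncomputable def thetaSq (t : ℕ) : PowerSeries ℤ :=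
  PowerSeries.mk fun m =>
    ∑ k ∈ Finset.range (m + 1), if m = t * k ^ 2 then (-1 : ℤ) ^ k else 0

/-- `(-q^a; q^k)_∞ = ∏_{j ≥ 0} (1 + q^{a + k j})` as a formal power series over ℤ. -/
noncomputable def aqk (a k : ℕ) : PowerSeries ℤ :=
  PowerSeries.mk fun n =>
    PowerSeries.coeff (R := ℤ) n
      (∏ j ∈ Finset.range (n + 1), (1 + (PowerSeries.X : PowerSeries ℤ) ^ (a + k * j)))

/-- Extension of a function on ℕ by zero to ℤ. -/
noncomputable def extZ (f : ℕ → ℤ) : ℤ → ℤ := fun m => if 0 ≤ m then f m.toNat else 0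

/-!
Modulo 5 we have `E⁵ ≡ E(q⁵)` for `E = (q; q)_∞`, so the generating function `θ / E` equals
`θ · (E³)³ / (E²)⁵`, where `θ = Σ (-1)ᵏ q^{5t k²}` and `(E²)⁵` only involve exponents divisible
by 5. By Jacobi's identity `E³ = Σ (-1)ᵏ (2k+1) q^{k(k+1)/2}`, and `k(k+1)/2 ≡ 3 (mod 5)` forces
`5 ∣ 2k+1`; hence modulo 5 the exponents of `E³` are `≡ 0, 1`, those of `(E³)³` are never `≡ 4`,
and neither are those of `θ / E`.

Jacobi's identity comes from Rothe's q-binomial theorem: differentiating a finite triple product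
at `w = 1` gives `Σₖ (-1)ᵏ q^{k(k+1)/2} ((n+1+k) [2n+1, n+1+k] - (n-k) [2n+1, n-k]) = (q; q)ₙ²`,
and modulo `X^M` every Gaussian binomial `[a+b, a]` with `a, b ≥ M` is `1 / E`, because
`[a+b, a] (q; q)ₐ (q; q)_b = (q; q)_{a+b}`.
-/

theorem choose_two_mul_two_add_self (x : ℕ) : x.choose 2 * 2 + x = x * x := by
  rw [Nat.choose_two_right, Nat.div_mul_cancel (Nat.even_mul_pred_self x).two_dvd]
  cases x <;> simp [Nat.mul_succ]

theorem le_choose_two_succ (k : ℕ) : k ≤ (k + 1).choose 2 := by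
  rw [Nat.choose_succ_succ, Nat.choose_one_right]
  omega

section QAnalogues

variable {R : Type*} [CommRing R] (q : R)

-- `qPochhammer q n` is `(q; q)ₙ` and `qBinomial q m k` is the Gaussian binomial `[m, k]`.
def qPochhammer (n : ℕ) : R := ∏ j ∈ range n, (1 - q ^ (j + 1))

def qBinomial : ℕ → ℕ → R
  | _, 0 => 1
  | 0, _ + 1 => 0
  | m + 1, k + 1 => qBinomial m k + q ^ (k + 1) * qBinomial m (k + 1)

@[simp]
theorem qPochhammer_zero : qPochhammer q 0 = 1 := prod_range_zero _

theorem qPochhammer_succ (n : ℕ) :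
    qPochhammer q (n + 1) = qPochhammer q n * (1 - q ^ (n + 1)) :=
  prod_range_succ _ _

@[simp]
theorem qBinomial_zero_right (m : ℕ) : qBinomial q m 0 = 1 := by
  cases m <;> rfl

theorem qBinomial_succ_succ (m k : ℕ) :
    qBinomial q (m + 1) (k + 1) = qBinomial q m k + q ^ (k + 1) * qBinomial q m (k + 1) :=
  rfl

theorem qBinomial_eq_zero_of_lt : ∀ {m k : ℕ}, m < k → qBinomial q m k = 0
  | 0, _ + 1, _ => rfl
  | m + 1, k + 1, h => by
    rw [qBinomial_succ_succ, qBinomial_eq_zero_of_lt (by omega),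
      qBinomial_eq_zero_of_lt (m := m) (by omega), mul_zero, add_zero]

@[simp]
theorem qBinomial_self : ∀ m : ℕ, qBinomial q m m = 1
  | 0 => rfl
  | m + 1 => by
    rw [qBinomial_succ_succ, qBinomial_self m, qBinomial_eq_zero_of_lt q m.lt_succ_self,
      mul_zero, add_zero]

theorem qBinomial_add_mul_qPochhammer (a b : ℕ) :
    qBinomial q (a + b) a * qPochhammer q a * qPochhammer q b = qPochhammer q (a + b) := by
  induction b generalizing a with
  | zero => simp
  | succ b ihb =>
    induction a with
    | zero => simp
    | succ a iha =>
      have h := ihb (a + 1)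
      rw [show a + 1 + b = a + (b + 1) by omega] at h
      rw [show a + 1 + (b + 1) = a + (b + 1) + 1 by omega, qBinomial_succ_succ,
        qPochhammer_succ q (a + (b + 1))]
      simp only [qPochhammer_succ q a, qPochhammer_succ q b] at iha h ⊢
      linear_combination (1 - q ^ (a + 1)) * iha + q ^ (a + 1) * (1 - q ^ (b + 1)) * h

/-- Rothe's q-binomial theorem; the factor `s` absorbs the shift `q ^ j ↦ q ^ (j + 1)` when the
induction splits off the first factor. -/
theorem coeff_prod_C_add_C_mul_X (y : R) (m : ℕ) : ∀ (s : R) (i : ℕ),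
    (∏ j ∈ range m, (Polynomial.C y + Polynomial.C (s * q ^ j) * Polynomial.X)).coeff i =
      s ^ i * q ^ i.choose 2 * qBinomial q m i * y ^ (m - i) := by
  induction m with
  | zero =>
    rintro s (_ | i)
    · simp
    · simp [Polynomial.coeff_one, qBinomial_eq_zero_of_lt q (Nat.succ_pos i)]
  | succ m ih =>
    intro s i
    have hshift : ∀ j ∈ range m, Polynomial.C y + Polynomial.C (s * q ^ (j + 1)) * Polynomial.X
        = Polynomial.C y + Polynomial.C (s * q * q ^ j) * Polynomial.X := by
      intro j _; rw [pow_succ]; ring_nf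
    rw [prod_range_succ', prod_congr rfl hshift, pow_zero, mul_one, mul_add, ← mul_assoc,
      Polynomial.coeff_add, Polynomial.coeff_mul_C]
    rcases i with _ | i
    · rw [Polynomial.coeff_mul_X_zero, ih]
      simp [pow_succ]
    · rw [Polynomial.coeff_mul_X, Polynomial.coeff_mul_C, ih, ih, qBinomial_succ_succ,
        Nat.choose_succ_succ, Nat.choose_one_right]
      rcases lt_or_ge m (i + 1) with h | h
      · rw [qBinomial_eq_zero_of_lt q h, show m + 1 - (i + 1) = m - i by omega]
        ring
      · rw [show m + 1 - (i + 1) = m - (i + 1) + 1 by omega, show m - i = m - (i + 1) + 1 by omega]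
        ring

end QAnalogues

section FiniteJacobi

variable {R : Type*} [CommRing R] (q : R)

theorem prod_range_pow_sub_pow (n : ℕ) :
    ∏ j ∈ range n, (q ^ j - q ^ n) = q ^ n.choose 2 * qPochhammer q n := by
  rw [qPochhammer, ← prod_range_reflect (fun j => 1 - q ^ (j + 1)), Nat.choose_two_right,
    ← sum_range_id, ← prod_pow_eq_pow_sum, ← prod_mul_distrib]
  refine prod_congr rfl fun j hj => ?_
  rw [mem_range] at hj
  rw [show n - 1 - j + 1 = n - j by omega, mul_sub, mul_one, ← pow_add, Nat.add_sub_cancel' hj.le]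

/-- Up to the factor `q ^ (n + n.choose 2 + n * n)`, this is the finite Jacobi triple product
`(w - 1) ∏_{l=1}^{n} (w - q^l) (q^l w - 1)`, in a form that Rothe's theorem expands. -/
noncomputable def finiteTripleProduct (n : ℕ) : Polynomial R :=
  ∏ j ∈ range (2 * n + 1), (Polynomial.C (-q ^ n) + Polynomial.C (q ^ j) * Polynomial.X)

theorem coeff_finiteTripleProduct (n i : ℕ) :
    (finiteTripleProduct q n).coeff i =
      q ^ i.choose 2 * qBinomial q (2 * n + 1) i * (-q ^ n) ^ (2 * n + 1 - i) := by
  simpa [finiteTripleProduct] using coeff_prod_C_add_C_mul_X q (-q ^ n) (2 * n + 1) 1 i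

theorem eval_one_derivative_finiteTripleProduct_eq_sum (n : ℕ) :
    (Polynomial.derivative (finiteTripleProduct q n)).eval 1 =
      ∑ i ∈ range (2 * n + 2), (finiteTripleProduct q n).coeff i * i := by
  have hdeg : (finiteTripleProduct q n).natDegree < 2 * n + 2 := by
    refine Nat.lt_succ_of_le (Polynomial.natDegree_le_iff_coeff_eq_zero.mpr fun N hN => ?_)
    rw [coeff_finiteTripleProduct, qBinomial_eq_zero_of_lt q hN, mul_zero, zero_mul]
  rw [Polynomial.derivative_eval, Polynomial.sum_over_range' _ (fun _ => by simp) _ hdeg]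
  simp

theorem eval_one_derivative_finiteTripleProduct (n : ℕ) :
    (Polynomial.derivative (finiteTripleProduct q n)).eval 1 =
      (-1) ^ n * q ^ (n + n.choose 2 + n * n) * qPochhammer q n ^ 2 := by
  set f : ℕ → Polynomial R := fun j => Polynomial.C (-q ^ n) + Polynomial.C (q ^ j) * Polynomial.X
  have hsplit : finiteTripleProduct q n = Polynomial.C (q ^ n) * (Polynomial.X - 1) *
      ((∏ j ∈ range n, f j) * ∏ l ∈ range n, f (n + 1 + l)) := by
    rw [finiteTripleProduct, show 2 * n + 1 = n + 1 + n by ring, prod_range_add, prod_range_succ]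
    simp only [f, map_neg]
    ring
  have hupper :
      ∏ l ∈ range n, (q ^ (n + 1 + l) - q ^ n) = (-1) ^ n * q ^ (n * n) * qPochhammer q n := by
    calc ∏ l ∈ range n, (q ^ (n + 1 + l) - q ^ n) = ∏ l ∈ range n, (-q ^ n * (1 - q ^ (l + 1))) :=
          prod_congr rfl fun l _ => by ring
      _ = _ := by rw [prod_mul_distrib, prod_const, card_range, qPochhammer]; ring
  have hroot : ∀ (a : R) (Q : Polynomial R),
      (Polynomial.derivative (Polynomial.C a * (Polynomial.X - 1) * Q)).eval 1 = a * Q.eval 1 := by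
    intro a Q
    simp [Polynomial.derivative_mul]
  have heval : ∀ e, (Polynomial.C (-q ^ n) + Polynomial.C (q ^ e) * Polynomial.X).eval 1 =
      q ^ e - q ^ n := fun e => by simp [neg_add_eq_sub]
  rw [hsplit, hroot, Polynomial.eval_mul, Polynomial.eval_prod, Polynomial.eval_prod]
  simp only [f, heval, prod_range_pow_sub_pow, hupper]
  ring

theorem coeff_finiteTripleProduct_pair (k d : ℕ) :
    (finiteTripleProduct q (k + d)).coeff d * d +
        (finiteTripleProduct q (k + d)).coeff (k + d + 1 + k) * ((k + d + 1 + k : ℕ) : R) =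
      (-1) ^ (k + d) * q ^ (k + d + (k + d).choose 2 + (k + d) * (k + d)) *
        ((-1) ^ k * q ^ (k + 1).choose 2 *
          (((k + d + 1 + k : ℕ) : R) * qBinomial q (2 * (k + d) + 1) (k + d + 1 + k) -
            d * qBinomial q (2 * (k + d) + 1) d)) := by
  have elow : d.choose 2 + (k + d) * (k + d + 1 + k) =
      k + d + (k + d).choose 2 + (k + d) * (k + d) + (k + 1).choose 2 := by
    nlinarith [choose_two_mul_two_add_self d, choose_two_mul_two_add_self (k + d),
      choose_two_mul_two_add_self (k + 1)]
  have ehigh : (k + d + 1 + k).choose 2 + (k + d) * d =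
      k + d + (k + d).choose 2 + (k + d) * (k + d) + (k + 1).choose 2 := by
    nlinarith [choose_two_mul_two_add_self d, choose_two_mul_two_add_self (k + d),
      choose_two_mul_two_add_self (k + 1), choose_two_mul_two_add_self (k + d + 1 + k)]
  have hsign : (-1 : R) ^ d = (-1) ^ (k + d) * (-1) ^ k := by
    rw [← pow_add, show k + d + k = d + 2 * k by ring, pow_add, pow_mul, neg_one_sq, one_pow,
      mul_one]
  rw [coeff_finiteTripleProduct, coeff_finiteTripleProduct,
    show 2 * (k + d) + 1 - d = k + d + 1 + k by omega,
    show 2 * (k + d) + 1 - (k + d + 1 + k) = d by omega]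
  simp only [neg_pow (q ^ (k + d)), ← pow_mul]
  calc _ = (-1) ^ (k + d + 1 + k) * q ^ (d.choose 2 + (k + d) * (k + d + 1 + k)) *
          (d * qBinomial q (2 * (k + d) + 1) d) +
        (-1) ^ d * q ^ ((k + d + 1 + k).choose 2 + (k + d) * d) *
          (((k + d + 1 + k : ℕ) : R) * qBinomial q (2 * (k + d) + 1) (k + d + 1 + k)) := by ring
    _ = _ := by rw [elow, ehigh, hsign]; ring

theorem jacobi_identity_finite [IsDomain R] (hq : q ≠ 0) (n : ℕ) :
    ∑ k ∈ range (n + 1), (-1) ^ k * q ^ (k + 1).choose 2 *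
      (((n + 1 + k : ℕ) : R) * qBinomial q (2 * n + 1) (n + 1 + k) -
        ((n - k : ℕ) : R) * qBinomial q (2 * n + 1) (n - k)) = qPochhammer q n ^ 2 := by
  have h := (eval_one_derivative_finiteTripleProduct_eq_sum q n).symm.trans
    (eval_one_derivative_finiteTripleProduct q n)
  rw [show 2 * n + 2 = n + 1 + (n + 1) by ring, sum_range_add,
    ← sum_range_reflect (fun i => (finiteTripleProduct q n).coeff i * i) (n + 1),
    ← sum_add_distrib] at h
  refine mul_left_cancel₀ (by simp [hq] : (-1) ^ n * q ^ (n + n.choose 2 + n * n) ≠ 0) ?_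
  rw [← h, mul_sum]
  refine sum_congr rfl fun k hk => ?_
  obtain ⟨d, rfl⟩ : ∃ d, n = k + d := ⟨n - k, by rw [mem_range] at hk; omega⟩
  rw [show k + d + 1 - 1 - k = d by omega, show k + d - k = d by omega,
    coeff_finiteTripleProduct_pair]

end FiniteJacobi

section EulerCube

abbrev TruncSeries (M : ℕ) : Type := PowerSeries ℤ ⧸ Ideal.span {(X : PowerSeries ℤ) ^ M}

noncomputable abbrev modXPow (M : ℕ) : PowerSeries ℤ →+* TruncSeries M := Ideal.Quotient.mk _

theorem modXPow_eq_iff {M : ℕ} {a b : PowerSeries ℤ} :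
    modXPow M a = modXPow M b ↔ ∀ m < M, coeff m a = coeff m b := by
  simp only [modXPow, Ideal.Quotient.eq, Ideal.mem_span_singleton, X_pow_dvd_iff, map_sub,
    sub_eq_zero]

theorem modXPow_X_pow {M e : ℕ} (h : M ≤ e) : modXPow M (X ^ e) = 0 :=
  Ideal.Quotient.eq_zero_iff_mem.mpr (Ideal.mem_span_singleton.mpr (pow_dvd_pow X h))

theorem X_pow_dvd_qPochhammer_sub {a b : ℕ} (h : a ≤ b) :
    (X : PowerSeries ℤ) ^ (a + 1) ∣ qPochhammer X b - qPochhammer X a := by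
  induction b, h using Nat.le_induction with
  | base => simp
  | succ b hab ih =>
    rw [qPochhammer_succ, mul_one_sub, sub_right_comm]
    exact dvd_sub ih (dvd_mul_of_dvd_right (pow_dvd_pow X (by omega)) _)

theorem modXPow_euler_one {M a : ℕ} (h : M ≤ a + 1) :
    modXPow M (euler 1) = modXPow M (qPochhammer X a) := by
  have hstable : ∀ m b, m ≤ b → coeff m (qPochhammer (X : PowerSeries ℤ) b) =
      coeff m (qPochhammer X m) := fun m b hmb => by
    rw [← sub_eq_zero, ← map_sub]
    exact X_pow_dvd_iff.mp (X_pow_dvd_qPochhammer_sub hmb) m (by omega)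
  refine modXPow_eq_iff.mpr fun m hm => ?_
  rw [hstable m a (by omega), euler, coeff_mk]
  simpa only [one_mul, qPochhammer] using hstable m (m + 1) (by omega)

theorem isUnit_euler_one : IsUnit (euler 1) := by
  refine isUnit_iff_constantCoeff.mpr ?_
  rw [← coeff_zero_eq_constantCoeff_apply, euler, coeff_mk]
  simp

theorem modXPow_qBinomial_mul_euler_one {M a b : ℕ} (ha : M ≤ a) (hb : M ≤ b) :
    modXPow M (qBinomial X (a + b) a) * modXPow M (euler 1) = 1 := by
  have h := congrArg (modXPow M) (qBinomial_add_mul_qPochhammer X a b)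
  rw [map_mul, map_mul, ← modXPow_euler_one (a := a) (by omega),
    ← modXPow_euler_one (a := b) (by omega), ← modXPow_euler_one (a := a + b) (by omega)] at h
  refine (isUnit_euler_one.map (modXPow M)).mul_right_cancel ?_
  rw [h, one_mul]

noncomputable def jacobiCubeSum (M : ℕ) : PowerSeries ℤ :=
  ∑ k ∈ range M, C ((-1) ^ k * (2 * k + 1) : ℤ) * X ^ (k + 1).choose 2

theorem modXPow_jacobiCubeSum_of_le {M N : ℕ} (h : M ≤ N) :
    modXPow M (jacobiCubeSum N) = modXPow M (jacobiCubeSum M) := by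
  obtain ⟨d, rfl⟩ := Nat.exists_eq_add_of_le h
  rw [jacobiCubeSum, jacobiCubeSum, sum_range_add, map_add, map_sum (modXPow M) _ (range d),
    add_eq_left]
  refine sum_eq_zero fun k _ => ?_
  rw [map_mul, modXPow_X_pow ((le_choose_two_succ (M + k)).trans' (by omega)), mul_zero]

theorem modXPow_jacobi_summand_mul_euler_one {M n k : ℕ} (hn : 2 * M ≤ n) (hk : k ≤ n) :
    modXPow M ((-1) ^ k * X ^ (k + 1).choose 2 *
        (((n + 1 + k : ℕ) : PowerSeries ℤ) * qBinomial X (2 * n + 1) (n + 1 + k) -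
          ((n - k : ℕ) : PowerSeries ℤ) * qBinomial X (2 * n + 1) (n - k))) *
        modXPow M (euler 1) =
      modXPow M (C ((-1) ^ k * (2 * k + 1) : ℤ) * X ^ (k + 1).choose 2) := by
  rcases lt_or_ge k M with hkM | hkM
  · have hhigh := modXPow_qBinomial_mul_euler_one (M := M) (a := n + 1 + k) (b := n - k)
      (by omega) (by omega)
    have hlow := modXPow_qBinomial_mul_euler_one (M := M) (a := n - k) (b := n + 1 + k)
      (by omega) (by omega)
    rw [show n + 1 + k + (n - k) = 2 * n + 1 by omega] at hhigh
    rw [show n - k + (n + 1 + k) = 2 * n + 1 by omega] at hlow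
    have hcast : ((n + 1 + k : ℕ) : TruncSeries M) - ((n - k : ℕ) : TruncSeries M) = 2 * k + 1 := by
      rw [Nat.cast_sub hk]
      push_cast
      ring
    simp only [map_mul, map_sub, map_pow, map_neg, map_one, map_natCast, map_add, map_ofNat]
    linear_combination (-1) ^ k * modXPow M X ^ (k + 1).choose 2 *
      (((n + 1 + k : ℕ) : TruncSeries M) * hhigh - ((n - k : ℕ) : TruncSeries M) * hlow + hcast)
  · simp [modXPow_X_pow ((le_choose_two_succ k).trans' hkM)]

theorem modXPow_euler_one_pow_three (M : ℕ) :
    modXPow M (euler 1 ^ 3) = modXPow M (jacobiCubeSum M) := by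
  have h := congrArg (modXPow M) (jacobi_identity_finite X (X_ne_zero (R := ℤ)) (2 * M))
  rw [map_pow, ← modXPow_euler_one (a := 2 * M) (by omega), map_sum] at h
  calc modXPow M (euler 1 ^ 3) = modXPow M (euler 1) ^ 2 * modXPow M (euler 1) := by
        rw [map_pow]; ring
    _ = modXPow M (jacobiCubeSum (2 * M + 1)) := by
      rw [← h, sum_mul, jacobiCubeSum, map_sum]
      exact sum_congr rfl fun k hk =>
        modXPow_jacobi_summand_mul_euler_one le_rfl (Nat.lt_succ_iff.mp (mem_range.mp hk))
    _ = _ := modXPow_jacobiCubeSum_of_le (by omega)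

theorem coeff_euler_one_pow_three (m : ℕ) :
    coeff m (euler 1 ^ 3) =
      ∑ k ∈ range (m + 1), if m = (k + 1).choose 2 then (-1 : ℤ) ^ k * (2 * k + 1) else 0 := by
  rw [modXPow_eq_iff.mp (modXPow_euler_one_pow_three (m + 1)) m m.lt_succ_self, jacobiCubeSum,
    map_sum]
  simp only [coeff_C_mul_X_pow]

end EulerCube

open scoped Pointwise

section ExponentsMod

def ExponentsModIn {K : Type*} [Semiring K] (n : ℕ) (S : Set (ZMod n)) (F : PowerSeries K) : Prop :=
  ∀ m : ℕ, (m : ZMod n) ∉ S → coeff m F = 0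

theorem exponentsModIn_pow_char {K : Type*} [CommSemiring K] (p : ℕ) [Fact p.Prime] [CharP K p]
    (F : PowerSeries K) : ExponentsModIn p {0} (F ^ p) := by
  intro m hm
  rw [Set.mem_singleton_iff, ZMod.natCast_eq_zero_iff] at hm
  -- below degree `m + 1`, `F ^ p` is the `p`-th power of a polynomial, i.e. a Frobenius twist
  -- of its `expand p`
  rw [← coeff_coe_trunc_of_lt m.lt_succ_self, ← trunc_trunc_pow,
    coeff_coe_trunc_of_lt m.lt_succ_self, ← Polynomial.coe_pow, Polynomial.coeff_coe,
    ← Polynomial.map_frobenius_expand, Polynomial.coeff_map, Polynomial.coeff_expand (Fact.out : p.Prime).pos, if_neg hm, map_zero]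

variable {K : Type*} [Semiring K] {n : ℕ} {S T : Set (ZMod n)} {F G : PowerSeries K}

theorem ExponentsModIn.mul (hF : ExponentsModIn n S F) (hG : ExponentsModIn n T G) :
    ExponentsModIn n (S + T) (F * G) := by
  intro m hm
  rw [coeff_mul]
  refine sum_eq_zero fun x hx => ?_
  rw [HasAntidiagonal.mem_antidiagonal] at hx
  by_cases h1 : (x.1 : ZMod n) ∈ S
  · refine mul_eq_zero_of_right _ (hG x.2 fun h2 => hm ?_)
    rw [← hx, Nat.cast_add]
    exact Set.add_mem_add h1 h2
  · rw [hF x.1 h1, zero_mul]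

theorem ExponentsModIn.of_mul_right {u : PowerSeries K} (hu : ExponentsModIn n {0} u)
    (hu0 : IsUnit (constantCoeff u)) (h : ExponentsModIn n S (F * u)) : ExponentsModIn n S F := by
  intro m
  induction m using Nat.strong_induction_on with
  | _ m ih =>
    intro hm
    have hsum := h m hm
    rw [coeff_mul,
      sum_eq_single_of_mem (m, 0) (HasAntidiagonal.mem_antidiagonal.mpr (add_zero m))] at hsum
    · rwa [coeff_zero_eq_constantCoeff_apply, hu0.mul_left_eq_zero] at hsum
    · rintro ⟨i, j⟩ hij hne
      rw [HasAntidiagonal.mem_antidiagonal] at hij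
      by_cases hj : (j : ZMod n) = 0
      · have hi : i < m := by
          rcases Nat.eq_zero_or_pos j with rfl | hpos
          · exact absurd (by simpa using hij) hne
          · omega
        rw [ih i hi (by rwa [← hij, Nat.cast_add, hj, add_zero] at hm), zero_mul]
      · rw [hu j (by simpa using hj), mul_zero]

theorem ExponentsModIn.map {L : Type*} [Semiring L] (φ : K →+* L) (hF : ExponentsModIn n S F) :
    ExponentsModIn n S (PowerSeries.map φ F) := fun m hm => by
  rw [coeff_map, hF m hm, map_zero]

end ExponentsMod

theorem exponentsModIn_thetaSq (n t : ℕ) : ExponentsModIn n {0} (thetaSq (n * t)) := by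
  intro m hm
  rw [thetaSq, coeff_mk]
  refine sum_eq_zero fun k _ => if_neg ?_
  rintro rfl
  simp [mul_assoc] at hm

theorem choose_two_succ_mem_or_two_mul_add_one_eq_zero (k : ℕ) :
    (((k + 1).choose 2 : ℕ) : ZMod 5) ∈ ({0, 1} : Set (ZMod 5)) ∨ (2 * k + 1 : ZMod 5) = 0 := by
  have hcast : (((k + 1).choose 2 : ℕ) : ZMod 5) * 2 = ((k : ZMod 5) + 1) * k := by
    have h' : (k + 1).choose 2 * 2 = (k + 1) * k := by
      linarith [choose_two_mul_two_add_self (k + 1)]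
    simpa using congrArg (Nat.cast : ℕ → ZMod 5) h'
  generalize (((k + 1).choose 2 : ℕ) : ZMod 5) = y at hcast ⊢
  generalize (k : ZMod 5) = x at hcast ⊢
  revert x y
  decide

theorem exponentsModIn_euler_one_pow_three :
    ExponentsModIn 5 {0, 1} (PowerSeries.map (Int.castRingHom (ZMod 5)) (euler 1 ^ 3)) := by
  intro m hm
  rw [coeff_map, coeff_euler_one_pow_three, map_sum]
  refine sum_eq_zero fun k _ => ?_
  split_ifs with hmk
  · subst hmk
    have h5 := (choose_two_succ_mem_or_two_mul_add_one_eq_zero k).resolve_left hm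
    simp [h5]
  · exact map_zero _

theorem stmt7_general (t : ℕ) (f : ℕ → ℤ)
    (hf : PowerSeries.mk f * euler 1 = thetaSq (5 * t)) (n : ℕ) :
    (5 : ℤ) ∣ f (5 * n + 4) := by
  have h4 : ((5 * n + 4 : ℕ) : ZMod 5) ∉ ({0} : Set (ZMod 5)) + ({0, 1} + {0, 1} + {0, 1}) := by
    push_cast
    rw [show (5 : ZMod 5) = 0 from rfl, zero_mul, zero_add]
    simp [Set.mem_add]
    decide
  have : Fact (Nat.Prime 5) := ⟨Nat.prime_five⟩
  set φ := PowerSeries.map (Int.castRingHom (ZMod 5))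
  have hu := exponentsModIn_pow_char 5 (φ (euler 1) ^ 2)
  have hu0 : IsUnit (constantCoeff ((φ (euler 1) ^ 2) ^ 5)) :=
    ((isUnit_euler_one.map φ).pow 2 |>.pow 5).map constantCoeff
  have hprod : φ (mk f) * (φ (euler 1) ^ 2) ^ 5 =
      φ (thetaSq (5 * t)) * (φ (euler 1 ^ 3) * φ (euler 1 ^ 3) * φ (euler 1 ^ 3)) := by
    rw [← hf]
    simp only [map_mul, map_pow]
    ring
  have hcube := exponentsModIn_euler_one_pow_three
  have hexp := ExponentsModIn.of_mul_right hu hu0 (hprod ▸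
    ((exponentsModIn_thetaSq 5 t).map _).mul ((hcube.mul hcube).mul hcube))
  have hcoeff := hexp _ h4
  rw [coeff_map, coeff_mk] at hcoeff
  exact (ZMod.intCast_zmod_eq_zero_iff_dvd _ 5).mp hcoeff

/-- p_{10t,5t}(5n+4) ≡ 0 (mod 5) for all t ≥ 1, n ≥ 0. -/
theorem stmt7 (t : ℕ) (ht : 0 < t) (f : ℕ → ℤ)
    (hf : PowerSeries.mk f * euler 1 = thetaSq (5 * t)) (n : ℕ) :
    (5 : ℤ) ∣ f (5 * n + 4) :=
  stmt7_general t f hf n
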